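/- (Proposition 1) Let A ⊆ {1,…,n} and let k be an integer with k > 0 and k + |A| > n. Then h_k applied to the derivations ∂y_i, i ∈ A, annihilates Δ_μ; that is, ∑_{d} ∏_{i∈A} (∂y_i)^{d_i} Δ_μ = 0, where the sum is over all families (d_i)_{i∈A} of nonnegative integers with ∑_{i∈A} d_i = k. -/

import Mathlib

open MvPolynomial

noncomputable section

/-- Partial derivatives with respect to two variables commute. -/
lemma pderiv_pderiv_comm {σ : Type*} (i j : σ) (f : MvPolynomial σ ℚ) :
    pderiv i (pderiv j f) = pderiv j (pderiv i f) := by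
  classical
  rcases eq_or_ne i j with rfl | hij
  · rfl
  · induction f using MvPolynomial.induction_on' with
    | monomial s a =>
      simp only [pderiv_monomial, Finsupp.coe_tsub, Pi.sub_apply, Finsupp.single_apply,
        if_neg hij, if_neg (Ne.symm hij), Nat.sub_zero]
      rw [tsub_tsub, tsub_tsub, add_comm, mul_right_comm]
    | add p q hp hq => simp [hp, hq]

lemma pderiv_commute {σ : Type*} (i j : σ) :
    Commute ((pderiv i).toLinearMap : Module.End ℚ (MvPolynomial σ ℚ))
      (pderiv j).toLinearMap := by
  apply LinearMap.ext
  intro f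
  simpa only [Module.End.mul_apply, Derivation.coeFn_coe] using pderiv_pderiv_comm i j f

/-- The monomial differential operator `∂^d = ∏ᵢ (∂/∂zᵢ)^(dᵢ)`. -/
def Dmon {σ : Type*} [DecidableEq σ] (d : σ →₀ ℕ) :
    Module.End ℚ (MvPolynomial σ ℚ) :=
  d.support.noncommProd
    (fun i => ((pderiv i).toLinearMap : Module.End ℚ (MvPolynomial σ ℚ)) ^ d i)
    fun i _ j _ _ => Commute.pow_pow (pderiv_commute i j) _ _

/-- `P(∂) Q` : the differential operator associated with `P` (substituting `∂/∂zᵢ`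
for each variable `zᵢ`) applied to `Q`. -/
def DP {σ : Type*} [DecidableEq σ] (P Q : MvPolynomial σ ℚ) : MvPolynomial σ ℚ :=
  (AddMonoidAlgebra.coeff P).sum fun d c => c • Dmon d Q

/-- `x`-exponents of the biexponents of the hook `(K+1,1^L)`, listed in lexicographic
order: `(0,0),(0,1),…,(0,K),(1,0),(2,0),…,(L,0)`. -/
def hookP (K L : ℕ) (j : Fin (K + L + 1)) : ℕ :=
  if (j : ℕ) ≤ K then 0 else (j : ℕ) - K

/-- `y`-exponents of the biexponents of the hook `(K+1,1^L)`. -/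
def hookQ (K L : ℕ) (j : Fin (K + L + 1)) : ℕ :=
  if (j : ℕ) ≤ K then (j : ℕ) else 0

/-- `Δ_μ = det (xᵢ^(p_j) yᵢ^(q_j))` for the hook `μ = (K+1,1^L)` of `n = K+L+1`;
the variable `Sum.inl i` is `xᵢ` and `Sum.inr i` is `yᵢ`. -/
def Delta (K L : ℕ) : MvPolynomial (Fin (K + L + 1) ⊕ Fin (K + L + 1)) ℚ :=
  Matrix.det fun i j =>
    X (Sum.inl i) ^ hookP K L j * X (Sum.inr i) ^ hookQ K L j

/-! Adjoin a formal variable `t` and apply `(1 - t ∂/∂yᵢ)⁻¹ = ∑ₛ tˢ (∂/∂yᵢ)ˢ` to each row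
`i ∈ A` of the matrix `(xᵢ^pⱼ yᵢ^qⱼ)`. Row `i` involves only `xᵢ, yᵢ`, so the coefficient of `tᵏ`
in the determinant of the new matrix is `h_k(∂yᵢ : i ∈ A) Δ_μ`. Since `∂/∂yᵢ yᵢ^j = j yᵢ^(j-1)`,
the column operations `Cⱼ ← Cⱼ - j t Cⱼ₋₁` (`1 ≤ j ≤ K`), of determinant one, undo the resolvent:
the rows in `A` become constant in `t` and the others have degree at most one. Hence the
determinant has degree at most `n - |A| < k` in `t`. -/

local notation "∂[" v "]" => (Derivation.toLinearMap (pderiv v) : Module.End ℚ (MvPolynomial _ ℚ))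

section Monomial

variable {σ : Type*}

theorem pderiv_pow_monomial (v : σ) (s : ℕ) (u : σ →₀ ℕ) (c : ℚ) :
    (∂[v] ^ s) (monomial u c) = (u v).descFactorial s • monomial (u - Finsupp.single v s) c := by
  induction s generalizing u c with
  | zero => simp
  | succ s ih =>
    rw [pow_succ, Module.End.mul_apply, Derivation.coeFn_coe, pderiv_monomial, ih,
      Finsupp.tsub_apply, Finsupp.single_eq_same, tsub_tsub, ← Finsupp.single_add, add_comm 1 s,
      smul_monomial, smul_monomial, nsmul_eq_mul, nsmul_eq_mul]
    congr 1
    rcases Nat.eq_zero_or_pos (u v) with h | h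
    · simp [h]
    · rw [← Nat.succ_pred_eq_of_pos h, Nat.succ_descFactorial_succ]
      push_cast
      ring

variable [DecidableEq σ]

theorem Dmon_single_add (a : σ) (b : ℕ) (f : σ →₀ ℕ) (ha : a ∉ f.support) (hb : b ≠ 0) :
    Dmon (Finsupp.single a b + f) = ∂[a] ^ b * Dmon f := by
  have hsupp : (Finsupp.single a b + f).support = Finset.cons a f.support ha := by
    rw [Finset.cons_eq_insert, Finsupp.support_add_eq, Finsupp.support_single a hb,
      Finset.singleton_union]
    simpa [Finsupp.support_single a hb] using ha
  have hfa : f a = 0 := Finsupp.notMem_support_iff.mp ha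
  unfold Dmon
  simp_rw [hsupp]
  rw [Finset.noncommProd_cons]
  congr 1
  · simp [hfa]
  · refine Finset.noncommProd_congr rfl (fun x hx => ?_) _
    have hxa : a ≠ x := fun h => ha (h ▸ hx)
    simp [hxa]

theorem Dmon_monomial (e u : σ →₀ ℕ) (c : ℚ) :
    Dmon e (monomial u c) = (e.prod fun v k => (u v).descFactorial k) • monomial (u - e) c := by
  induction e using Finsupp.induction with
  | zero => simp [Dmon]
  | single_add a b f ha hb ih =>
    have hfa : f a = 0 := Finsupp.notMem_support_iff.mp ha
    have hdisj : Disjoint (Finsupp.single a b).support f.support := by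
      simpa [Finsupp.support_single a hb] using ha
    rw [Dmon_single_add a b f ha hb, Module.End.mul_apply, ih, map_nsmul, pderiv_pow_monomial,
      smul_smul, Finsupp.tsub_apply, hfa, Nat.sub_zero, tsub_tsub, add_comm f,
      Finsupp.prod_add_index_of_disjoint hdisj, Finsupp.prod_single_index (by simp), mul_comm]

theorem Dmon_mapDomain_prod_monomial {ι : Type*} [Fintype ι] {v : ι → σ}
    (hv : v.Injective) (u : ι → σ →₀ ℕ) (hu : ∀ i j, i ≠ j → u i (v j) = 0) (d : ι →₀ ℕ) :
    Dmon (d.mapDomain v) (∏ i, monomial (u i) 1) = ∏ i, (∂[v i] ^ d i) (monomial (u i) 1) := by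
  have hsum : ∀ j, (∑ i, u i) (v j) = u j (v j) := fun j => by
    rw [Finsupp.finsetSum_apply, Finset.sum_eq_single j (fun i _ hij => hu i j hij) (by simp)]
  have hexp : ∑ i, u i - d.mapDomain v = ∑ i, (u i - Finsupp.single (v i) (d i)) := by
    ext w
    simp only [Finsupp.tsub_apply, Finsupp.finsetSum_apply, Finsupp.single_apply]
    by_cases hw : w ∈ Set.range v
    · obtain ⟨j, rfl⟩ := hw
      rw [Finsupp.mapDomain_apply hv, Finset.sum_eq_single j (fun i _ hij => hu i j hij) (by simp),
        Finset.sum_eq_single j (fun i _ hij => by simp [hu i j hij]) (by simp), if_pos rfl]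
    · rw [Finsupp.mapDomain_of_notMem_range _ _ hw, Nat.sub_zero]
      refine Finset.sum_congr rfl fun i _ => ?_
      rw [if_neg fun h => hw ⟨i, h⟩, Nat.sub_zero]
  have hcoeff : (d.mapDomain v).prod (fun w k => ((∑ i, u i) w).descFactorial k)
      = ∏ i, (u i (v i)).descFactorial (d i) := by
    rw [Finsupp.prod_mapDomain_index_inj hv, Finsupp.prod_fintype _ _ (by simp)]
    exact Finset.prod_congr rfl fun i _ => by rw [hsum]
  rw [← monomial_sum_one, Dmon_monomial, hexp, hcoeff]
  simp_rw [pderiv_pow_monomial, smul_monomial, ← monomial_sum_prod, nsmul_eq_mul, mul_one,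
    Nat.cast_prod]

end Monomial

section PowerSeries

open PowerSeries

theorem PowerSeries.coeff_prod_eq_zero_of_lt {R ι : Type*} [CommSemiring R] [DecidableEq ι]
    (s : Finset ι) (f : ι → R⟦X⟧) (b : ι → ℕ) (hf : ∀ i ∈ s, ∀ m, b i < m → coeff m (f i) = 0)
    {m : ℕ} (hm : ∑ i ∈ s, b i < m) : coeff m (∏ i ∈ s, f i) = 0 := by
  rw [coeff_prod]
  refine Finset.sum_eq_zero fun l hl => ?_
  obtain ⟨i, hi, hlt⟩ := Finset.exists_lt_of_sum_lt ((Finset.mem_finsuppAntidiag.mp hl).1 ▸ hm)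
  exact Finset.prod_eq_zero hi (hf i hi _ hlt)

theorem Matrix.coeff_det_eq_zero_of_lt {R n : Type*} [CommRing R] [Fintype n] [DecidableEq n]
    (W : Matrix n n R⟦X⟧) (b : n → ℕ) (hW : ∀ i j m, b i < m → coeff m (W i j) = 0) {m : ℕ}
    (hm : ∑ i, b i < m) : coeff m W.det = 0 := by
  rw [← det_transpose, det_apply, map_sum]
  refine Finset.sum_eq_zero fun σ _ => ?_
  simp only [transpose_apply]
  rw [Units.smul_def, map_zsmul,
    coeff_prod_eq_zero_of_lt _ _ b (fun i _ m' hm' => hW i (σ i) m' hm') hm, smul_zero]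

theorem PowerSeries.mk_pow_apply_of_apply_eq_nsmul {R S : Type*} [CommSemiring R] [Semiring S]
    [Module R S] (φ : Module.End R S) {f g : S} {c : ℕ} (h : φ f = c • g) :
    mk (fun s => (φ ^ s) f) = C f + c • (X * mk fun s => (φ ^ s) g) := by
  ext (_ | s)
  · simp
  · rw [coeff_mk, pow_succ, Module.End.mul_apply, h, map_nsmul, map_add, coeff_C,
      if_neg s.succ_ne_zero, zero_add, map_nsmul, coeff_succ_X_mul, coeff_mk]

end PowerSeries

section Bidiagonal

variable {R : Type*}

def Matrix.unitBidiagonal [Zero R] [One R] {n : ℕ} (c : Fin n → R) :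
    Matrix (Fin n) (Fin n) R :=
  fun a b => if a = b then 1 else if (a : ℕ) + 1 = b then c b else 0

variable [CommRing R] {n : ℕ}

theorem Matrix.det_unitBidiagonal (c : Fin n → R) : (unitBidiagonal c).det = 1 := by
  rw [det_of_isUpperTriangular]
  · simp [unitBidiagonal]
  · intro a b (hba : b < a)
    have hne : ¬ (a : ℕ) + 1 = b := by have := Fin.lt_def.mp hba; omega
    simp [unitBidiagonal, hba.ne', hne]

theorem Matrix.mul_unitBidiagonal_apply (W : Matrix (Fin (n + 1)) (Fin (n + 1)) R)
    (c : Fin (n + 1) → R) (hc : c 0 = 0) (i j : Fin (n + 1)) :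
    (W * unitBidiagonal c) i j = W i j + W i (j - 1) * c j := by
  rw [mul_apply]
  rcases eq_or_ne j 0 with rfl | hj
  · rw [hc, mul_zero, add_zero, Fintype.sum_eq_single 0 fun a ha => by simp [unitBidiagonal, ha]]
    simp [unitBidiagonal]
  · have hval : ((j - 1 : Fin (n + 1)) : ℕ) = j - 1 := Fin.val_sub_one_of_ne_zero hj
    have hpos : 0 < (j : ℕ) := Nat.pos_of_ne_zero (Fin.val_ne_zero_iff.mpr hj)
    have hne : j ≠ j - 1 := fun h => by have := congrArg Fin.val h; omega
    rw [Fintype.sum_eq_add j (j - 1) hne]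
    · simp [unitBidiagonal, hne.symm, hval, Nat.sub_add_cancel hpos]
    · rintro a ⟨haj, ha⟩
      have : ¬ (a : ℕ) + 1 = j := fun h => ha (Fin.ext (by omega))
      simp [unitBidiagonal, haj, this]

end Bidiagonal

section Hook

variable (K L : ℕ)

def hookMatrix :
    Matrix (Fin (K + L + 1)) (Fin (K + L + 1))
      (MvPolynomial (Fin (K + L + 1) ⊕ Fin (K + L + 1)) ℚ) :=
  fun i j => X (Sum.inl i) ^ hookP K L j * X (Sum.inr i) ^ hookQ K L j

theorem Delta_eq_det_hookMatrix : Delta K L = (hookMatrix K L).det := rfl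

theorem hookMatrix_eq_monomial (i j : Fin (K + L + 1)) :
    hookMatrix K L i j =
      monomial (Finsupp.single (Sum.inl i) (hookP K L j) +
        Finsupp.single (Sum.inr i) (hookQ K L j)) 1 := by
  rw [hookMatrix, X_pow_eq_monomial, X_pow_eq_monomial, monomial_mul, one_mul]

theorem pderiv_inr_hookMatrix (i j : Fin (K + L + 1)) :
    pderiv (Sum.inr i) (hookMatrix K L i j) = hookQ K L j • hookMatrix K L i (j - 1) := by
  by_cases hj : (j : ℕ) ≤ K
  · rcases eq_or_ne j 0 with rfl | hj0
    · simp [hookMatrix, hookQ, hookP]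
    · have hval : ((j - 1 : Fin (K + L + 1)) : ℕ) = j - 1 := Fin.val_sub_one_of_ne_zero hj0
      simp [hookMatrix, hookQ, hookP, hj, hval, show (j : ℕ) - 1 ≤ K by omega]
  · simp [hookMatrix, hookQ, hj]

theorem Dmon_mapDomain_inr_prod_hookMatrix (τ : Fin (K + L + 1) → Fin (K + L + 1))
    (d : Fin (K + L + 1) →₀ ℕ) :
    Dmon (d.mapDomain Sum.inr) (∏ i, hookMatrix K L i (τ i)) =
      ∏ i, (∂[Sum.inr i] ^ d i) (hookMatrix K L i (τ i)) := by
  simp_rw [hookMatrix_eq_monomial]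
  exact Dmon_mapDomain_prod_monomial Sum.inr_injective _
    (fun i j hij => by simp [Ne.symm hij]) d

variable (A : Finset (Fin (K + L + 1)))

def hookResolvent :
    Matrix (Fin (K + L + 1)) (Fin (K + L + 1))
      (PowerSeries (MvPolynomial (Fin (K + L + 1) ⊕ Fin (K + L + 1)) ℚ)) :=
  fun i j => if i ∈ A then PowerSeries.mk fun s => (∂[Sum.inr i] ^ s) (hookMatrix K L i j)
    else PowerSeries.C (hookMatrix K L i j)

theorem coeff_prod_hookResolvent (τ : Fin (K + L + 1) → Fin (K + L + 1)) (k : ℕ) :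
    PowerSeries.coeff k (∏ i, hookResolvent K L A i (τ i)) =
      ∑ d ∈ A.finsuppAntidiag k, ∏ i, (∂[Sum.inr i] ^ d i) (hookMatrix K L i (τ i)) := by
  have hA : ∀ i ∈ A, hookResolvent K L A i (τ i) =
      PowerSeries.mk fun s => (∂[Sum.inr i] ^ s) (hookMatrix K L i (τ i)) := fun i hi => if_pos hi
  have hAc : ∀ i ∈ Aᶜ, hookResolvent K L A i (τ i) = PowerSeries.C (hookMatrix K L i (τ i)) :=
    fun i hi => if_neg (Finset.mem_compl.mp hi)
  rw [← Finset.prod_mul_prod_compl A, Finset.prod_congr rfl hA, Finset.prod_congr rfl hAc,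
    ← map_prod, PowerSeries.coeff_mul_C, PowerSeries.coeff_prod, Finset.sum_mul]
  refine Finset.sum_congr rfl fun d hd => ?_
  have hd0 : ∀ i ∈ Aᶜ, d i = 0 := fun i hi => Finsupp.notMem_support_iff.mp fun h =>
    Finset.mem_compl.mp hi ((Finset.mem_finsuppAntidiag.mp hd).2 h)
  rw [← Finset.prod_mul_prod_compl A]
  congr 1
  · exact Finset.prod_congr rfl fun i _ => PowerSeries.coeff_mk _ _
  · exact Finset.prod_congr rfl fun i hi => by rw [hd0 i hi, pow_zero, Module.End.one_apply]

theorem coeff_det_hookResolvent (k : ℕ) :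
    PowerSeries.coeff k (hookResolvent K L A).det =
      ∑ d ∈ A.finsuppAntidiag k, Dmon (d.mapDomain Sum.inr) (Delta K L) := by
  rw [Delta_eq_det_hookMatrix, ← Matrix.det_transpose, ← Matrix.det_transpose (hookMatrix K L)]
  simp_rw [Matrix.det_apply, map_sum, Matrix.transpose_apply]
  rw [Finset.sum_comm]
  refine Finset.sum_congr rfl fun σ _ => ?_
  simp_rw [Units.smul_def, map_zsmul, coeff_prod_hookResolvent, Dmon_mapDomain_inr_prod_hookMatrix,
    Finset.smul_sum]

def hookColumnOp :
    Matrix (Fin (K + L + 1)) (Fin (K + L + 1))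
      (PowerSeries (MvPolynomial (Fin (K + L + 1) ⊕ Fin (K + L + 1)) ℚ)) :=
  Matrix.unitBidiagonal fun j => -(hookQ K L j • PowerSeries.X)

theorem det_hookColumnOp : (hookColumnOp K L).det = 1 :=
  Matrix.det_unitBidiagonal _

theorem coeff_hookResolvent_mul_hookColumnOp_eq_zero (i j : Fin (K + L + 1)) (m : ℕ)
    (hm : (if i ∈ A then 0 else 1) < m) :
    PowerSeries.coeff m ((hookResolvent K L A * hookColumnOp K L) i j) = 0 := by
  rw [hookColumnOp, Matrix.mul_unitBidiagonal_apply _ _ (by simp [hookQ])]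
  by_cases hi : i ∈ A
  · rw [if_pos hi] at hm
    have htel := PowerSeries.mk_pow_apply_of_apply_eq_nsmul _ (pderiv_inr_hookMatrix K L i j)
    simp only [hookResolvent, if_pos hi]
    rw [htel, mul_neg, mul_smul_comm, mul_comm _ PowerSeries.X, add_neg_cancel_right,
      PowerSeries.coeff_C, if_neg hm.ne']
  · rw [if_neg hi] at hm
    obtain ⟨m, rfl⟩ : ∃ m', m = m' + 2 := ⟨m - 2, by omega⟩
    simp only [hookResolvent, if_neg hi]
    rw [mul_neg, mul_smul_comm, map_add, map_neg, map_nsmul, PowerSeries.coeff_succ_mul_X,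
      PowerSeries.coeff_C, PowerSeries.coeff_C, if_neg (by omega), if_neg (by omega), smul_zero,
      neg_zero, add_zero]

end Hook

theorem stmt5_general (K L : ℕ) (A : Finset (Fin (K + L + 1))) (k : ℕ)
    (h : K + L + 1 < k + A.card) :
    ∑ d ∈ A.finsuppAntidiag k,
      Dmon (Finsupp.mapDomain Sum.inr d) (Delta K L) = 0 := by
  have hdeg : ∑ i, (if i ∈ A then 0 else 1) < k := by
    simp only [Finset.sum_ite, Finset.sum_const_zero, Finset.sum_const, smul_eq_mul, mul_one,
      zero_add, Finset.filter_notMem_eq_sdiff, Finset.card_univ_sdiff, Fintype.card_fin]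
    have hA := A.card_le_univ
    rw [Fintype.card_fin] at hA
    omega
  rw [← coeff_det_hookResolvent, ← mul_one (hookResolvent K L A).det, ← det_hookColumnOp K L,
    ← Matrix.det_mul]
  exact Matrix.coeff_det_eq_zero_of_lt _ _ (coeff_hookResolvent_mul_hookColumnOp_eq_zero K L A) hdeg

/-- Proposition 1: if `k > 0` and `k + |A| > n` then `h_k(∂yᵢ : i ∈ A) Δ_μ = 0`, i.e.
`∑_d ∏_{i ∈ A} (∂yᵢ)^(dᵢ) Δ_μ = 0`, the sum being over all families `(dᵢ)_{i ∈ A}` of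
nonnegative integers with `∑ dᵢ = k`. -/
theorem stmt5 (K L : ℕ) (A : Finset (Fin (K + L + 1))) (k : ℕ) (hk : 0 < k)
    (h : K + L + 1 < k + A.card) :
    ∑ d ∈ A.finsuppAntidiag k,
      Dmon (Finsupp.mapDomain Sum.inr d) (Delta K L) = 0 :=
  stmt5_general K L A k h
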